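/- Let μ ∈ ℂ with Re μ > 0. The solution space of the singular ODE system A^d dv/dx = Gv on the half-line x > 0 that decays as x → +∞, where the finite generalized eigenvalues of (A^d, G) are ±μ, is one-dimensional whenever exactly one generalized eigenvalue has negative real part; the decaying solutions are exactly those of the form v(x) = e^{-μx} z where (G + μ A^d) z = 0. -/

import Mathlib

/-!
With `κ = 0, μ⁻¹, -μ⁻¹` (the reciprocals of the generalized eigenvalues `∞, μ, -μ`), `det A = 0`
and `det (G ∓ μA) = 0` give nonzero row vectors `ψ` with `ψ A = κ ψ G`. Since `0` is not a
generalized eigenvalue, `G` is invertible, and the rows `ψ G` are eigenvectors of `X ↦ X G⁻¹ A`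
for three distinct eigenvalues, hence a basis of row vectors. Pairing `A v' = G v` with `ψ` gives
the scalar equation `κ (ψ G ⬝ v)' = ψ G ⬝ v`: the component with `κ = 0` vanishes, the one with
`κ = μ⁻¹` grows like `e^{μx}` and so vanishes for a decaying solution, and the one with
`κ = -μ⁻¹` is a multiple of `e^{-μx}`. Pairing `(G + μA) z = 0` with `ψ` likewise kills the first
two components of `z`, so that kernel is a line.
-/

open Filter Matrix Topology

section ScalarODE

theorem hasDerivAt_cexp_mul_ofReal (ν : ℂ) (x : ℝ) :
    HasDerivAt (fun t : ℝ => Complex.exp (ν * t)) (Complex.exp (ν * x) * ν) x := by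
  simpa using ((hasDerivAt_id x).ofReal_comp.const_mul ν).cexp

theorem tendsto_cexp_mul_atTop_zero {ν : ℂ} (hν : ν.re < 0) :
    Tendsto (fun x : ℝ => Complex.exp (ν * x)) atTop (𝓝 0) := by
  simpa [Complex.tendsto_exp_nhds_zero_iff] using tendsto_id.const_mul_atTop_of_neg hν

theorem eq_cexp_mul_of_deriv_eq_mul {f : ℝ → ℂ} {ν : ℂ} (hf : Differentiable ℝ f)
    (h : ∀ x, 0 < x → deriv f x = ν * f x) {x : ℝ} (hx : 0 < x) :
    f x = Complex.exp (ν * x) * (Complex.exp (-ν) * f 1) := by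
  have hg : ∀ t : ℝ, HasDerivAt (fun t : ℝ => Complex.exp (-ν * t) * f t)
      (Complex.exp (-ν * t) * (deriv f t - ν * f t)) t := fun t =>
    ((hasDerivAt_cexp_mul_ofReal (-ν) t).fun_mul (hf t).hasDerivAt).congr_deriv (by ring)
  have hconst : Complex.exp (-ν * x) * f x = Complex.exp (-ν * (1 : ℝ)) * f 1 :=
    isOpen_Ioi.is_const_of_deriv_eq_zero isPreconnected_Ioi
      (fun t _ => (hg t).differentiableAt.differentiableWithinAt)
      (fun t ht => by rw [(hg t).deriv, h t ht, sub_self, mul_zero]; rfl)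
      hx (Set.mem_Ioi.mpr one_pos)
  rw [Complex.ofReal_one, mul_one] at hconst
  rw [← hconst, ← mul_assoc, ← Complex.exp_add, neg_mul, add_neg_cancel, Complex.exp_zero,
    one_mul]

theorem eq_zero_of_tendsto_cexp_mul {f : ℝ → ℂ} {ν c : ℂ} (hν : 0 ≤ ν.re)
    (hf : ∀ x, 0 < x → f x = Complex.exp (ν * x) * c) (h : Tendsto f atTop (𝓝 0)) : c = 0 := by
  refine norm_le_zero_iff.mp (ge_of_tendsto (by simpa using h.norm) ?_)
  filter_upwards [eventually_gt_atTop 0] with x hx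
  rw [hf x hx, norm_mul, Complex.norm_exp]
  refine le_mul_of_one_le_left (norm_nonneg c) (Real.one_le_exp ?_)
  simpa using mul_nonneg hν hx.le

/-- `κ = 0` is allowed: then `κ⁻¹ = 0` and the equation itself says `f = 0`. -/
theorem eq_zero_of_mul_deriv_eq_of_tendsto {f : ℝ → ℂ} {κ : ℂ} (hκ : 0 ≤ κ⁻¹.re)
    (hf : Differentiable ℝ f) (h : ∀ x, 0 < x → κ * deriv f x = f x)
    (hlim : Tendsto f atTop (𝓝 0)) {x : ℝ} (hx : 0 < x) : f x = 0 := by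
  rcases eq_or_ne κ 0 with rfl | hκ0
  · simpa using (h x hx).symm
  have h' : ∀ t, 0 < t → deriv f t = κ⁻¹ * f t := fun t ht => by
    rw [← h t ht, inv_mul_cancel_left₀ hκ0]
  have hc := eq_zero_of_tendsto_cexp_mul hκ (fun t ht => eq_cexp_mul_of_deriv_eq_mul hf h' ht) hlim
  rw [eq_cexp_mul_of_deriv_eq_mul hf h' hx, hc, mul_zero]

end ScalarODE

section PencilLinearAlgebra

variable {K n : Type*} [Field K] [Fintype n] {A G : Matrix n n K}

theorem vecMul_dotProduct_eq_zero_of_mulVec_eq_zero {s κ : K} {ψ z : n → K}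
    (hz : (G - s • A) *ᵥ z = 0) (hψ : ψ ᵥ* A = κ • ψ ᵥ* G) (hsκ : s * κ ≠ 1) :
    (ψ ᵥ* G) ⬝ᵥ z = 0 := by
  rw [sub_mulVec, smul_mulVec, sub_eq_zero] at hz
  have : (ψ ᵥ* G) ⬝ᵥ z = (s * κ) * (ψ ᵥ* G) ⬝ᵥ z :=
    calc (ψ ᵥ* G) ⬝ᵥ z = s * (ψ ᵥ* A) ⬝ᵥ z := by
          rw [← dotProduct_mulVec, hz, dotProduct_smul, dotProduct_mulVec, smul_eq_mul]
      _ = (s * κ) * (ψ ᵥ* G) ⬝ᵥ z := by rw [hψ, smul_dotProduct, smul_eq_mul, mul_assoc]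
  by_contra hne
  exact hsκ ((mul_eq_right₀ hne).mp this.symm)

variable [DecidableEq n]

theorem exists_vecMul_eq_inv_smul_vecMul {s : K} (hs : s ≠ 0) (h : (G - s • A).det = 0) :
    ∃ ψ ≠ 0, ψ ᵥ* A = s⁻¹ • ψ ᵥ* G := by
  obtain ⟨ψ, hψ, hψA⟩ := exists_vecMul_eq_zero_iff.mpr h
  rw [vecMul_sub, vecMul_smul, sub_eq_zero] at hψA
  exact ⟨ψ, hψ, by rw [hψA, smul_smul, inv_mul_cancel₀ hs, one_smul]⟩

theorem linearIndependent_vecMul_of_vecMul_eq_smul {ι : Type*} (hG : IsUnit G)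
    {ψ : ι → n → K} {κ : ι → K} (hκ : Function.Injective κ) (hψ : ∀ i, ψ i ≠ 0)
    (h : ∀ i, ψ i ᵥ* A = κ i • ψ i ᵥ* G) : LinearIndependent K fun i => ψ i ᵥ* G := by
  refine Module.End.eigenvectors_linearIndependent' (G⁻¹ * A).vecMulLinear κ hκ _ fun i =>
    ⟨Module.End.mem_eigenspace_iff.mpr ?_, ?_⟩
  · rw [vecMulLinear_apply, vecMul_vecMul,
      mul_nonsing_inv_cancel_left G A ((isUnit_iff_isUnit_det G).mp hG), h]
  · exact fun h0 => hψ i (vecMul_injective_iff_isUnit.mpr hG (by simpa using h0))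

theorem eq_of_forall_dotProduct_eq {φ : n → n → K} (hφ : LinearIndependent K φ) {w w' : n → K}
    (h : ∀ i, φ i ⬝ᵥ w = φ i ⬝ᵥ w') : w = w' :=
  mulVec_injective_iff_isUnit.mpr (linearIndependent_rows_iff_isUnit.mp hφ) (funext h)

theorem exists_eq_smul_of_forall_ne_dotProduct_eq_zero {φ : n → n → K}
    (hφ : LinearIndependent K φ) (j : n) {z₀ z : n → K} (hz₀ : z₀ ≠ 0)
    (h₀ : ∀ i ≠ j, φ i ⬝ᵥ z₀ = 0) (h : ∀ i ≠ j, φ i ⬝ᵥ z = 0) : ∃ c : K, z = c • z₀ := by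
  have hj : φ j ⬝ᵥ z₀ ≠ 0 := fun hj => hz₀ <| eq_of_forall_dotProduct_eq hφ fun i => by
    rw [dotProduct_zero]
    by_cases hi : i = j
    · rwa [hi]
    · exact h₀ i hi
  refine ⟨(φ j ⬝ᵥ z) / (φ j ⬝ᵥ z₀), eq_of_forall_dotProduct_eq hφ fun i => ?_⟩
  rw [dotProduct_smul, smul_eq_mul]
  by_cases hi : i = j
  · rw [hi, div_mul_cancel₀ _ hj]
  · rw [h i hi, h₀ i hi, mul_zero]

end PencilLinearAlgebra

section PencilODE

variable {n : Type*} [Fintype n] {A G : Matrix n n ℂ}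

theorem HasDerivAt.const_dotProduct (u : n → ℂ) {v : ℝ → n → ℂ} {v' : n → ℂ} {x : ℝ}
    (hv : HasDerivAt v v' x) : HasDerivAt (fun t => u ⬝ᵥ v t) (u ⬝ᵥ v') x :=
  (LinearMap.toContinuousLinearMap (dotProductBilin ℝ ℝ u)).hasFDerivAt.comp_hasDerivAt x hv

theorem mul_deriv_vecMul_dotProduct {v : ℝ → n → ℂ} {x : ℝ} (hv : DifferentiableAt ℝ v x)
    (hode : A *ᵥ deriv v x = G *ᵥ v x) {ψ : n → ℂ} {κ : ℂ} (hψ : ψ ᵥ* A = κ • ψ ᵥ* G) :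
    κ * deriv (fun t => (ψ ᵥ* G) ⬝ᵥ v t) x = (ψ ᵥ* G) ⬝ᵥ v x := by
  rw [(hv.hasDerivAt.const_dotProduct _).deriv, ← smul_eq_mul, ← smul_dotProduct, ← hψ,
    ← dotProduct_mulVec, hode, dotProduct_mulVec]

theorem forall_mulVec_deriv_eq_iff_of_eq_cexp_smul {v : ℝ → n → ℂ} {ν : ℂ} {z : n → ℂ}
    (hv : ∀ x, 0 < x → v x = Complex.exp (ν * x) • z) :
    (∀ x, 0 < x → A *ᵥ deriv v x = G *ᵥ v x) ↔ (G - ν • A) *ᵥ z = 0 := by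
  have hres : ∀ x, 0 < x → G *ᵥ v x - A *ᵥ deriv v x = Complex.exp (ν * x) • (G - ν • A) *ᵥ z := by
    intro x hx
    have hderiv : deriv v x = (Complex.exp (ν * x) * ν) • z := by
      rw [Filter.EventuallyEq.deriv_eq (f := fun t : ℝ => Complex.exp (ν * t) • z)]
      · exact ((hasDerivAt_cexp_mul_ofReal ν x).smul_const z).deriv
      · filter_upwards [Ioi_mem_nhds hx] with t ht using hv t ht
    rw [hderiv, hv x hx, mulVec_smul, mulVec_smul, sub_mulVec, smul_mulVec, mul_smul, smul_sub]
  constructor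
  · intro h
    have := hres 1 one_pos
    rwa [h 1 one_pos, sub_self, eq_comm, smul_eq_zero_iff_right (Complex.exp_ne_zero _)] at this
  · intro h x hx
    exact (sub_eq_zero.mp (by rw [hres x hx, h, smul_zero])).symm

end PencilODE

section StableSubspace

variable {A G : Matrix (Fin 3) (Fin 3) ℂ} {μ : ℂ}

theorem exists_vecMul_eq_smul_vecMul_linearIndependent (hA : A.det = 0) (hG : IsUnit G)
    (hμ : μ ≠ 0) (h₁ : (G - μ • A).det = 0) (h₂ : (G - (-μ) • A).det = 0) :
    ∃ ψ : Fin 3 → Fin 3 → ℂ, (∀ i, ψ i ᵥ* A = ![0, μ⁻¹, -μ⁻¹] i • ψ i ᵥ* G) ∧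
      LinearIndependent ℂ fun i => ψ i ᵥ* G := by
  obtain ⟨ψ₀, hψ₀, e₀⟩ := exists_vecMul_eq_zero_iff.mpr hA
  obtain ⟨ψ₁, hψ₁, e₁⟩ := exists_vecMul_eq_inv_smul_vecMul hμ h₁
  obtain ⟨ψ₂, hψ₂, e₂⟩ := exists_vecMul_eq_inv_smul_vecMul (neg_ne_zero.mpr hμ) h₂
  have hψ : ∀ i, ![ψ₀, ψ₁, ψ₂] i ᵥ* A = ![0, μ⁻¹, -μ⁻¹] i • ![ψ₀, ψ₁, ψ₂] i ᵥ* G := by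
    intro i
    fin_cases i
    · simpa using e₀
    · exact e₁
    · simpa using e₂
  refine ⟨_, hψ, linearIndependent_vecMul_of_vecMul_eq_smul hG ?_ (fun i => ?_) hψ⟩
  · intro i j hij
    fin_cases i <;> fin_cases j <;> simp [hμ, hμ.symm, self_eq_neg, neg_eq_self] at hij ⊢
  · fin_cases i <;> assumption

theorem eq_cexp_smul_of_tendsto_zero (hμ : 0 < μ.re) {ψ : Fin 3 → Fin 3 → ℂ}
    (hψ : ∀ i, ψ i ᵥ* A = ![0, μ⁻¹, -μ⁻¹] i • ψ i ᵥ* G)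
    (hφ : LinearIndependent ℂ fun i => ψ i ᵥ* G) {v : ℝ → Fin 3 → ℂ} (hv : Differentiable ℝ v)
    (hode : ∀ x, 0 < x → A *ᵥ deriv v x = G *ᵥ v x) (hdecay : Tendsto v atTop (𝓝 0)) :
    ∀ x : ℝ, 0 < x → v x = Complex.exp (-μ * x) • Complex.exp μ • v 1 := by
  intro x hx
  have hμ0 : μ ≠ 0 := fun h => by simp [h] at hμ
  set f : Fin 3 → ℝ → ℂ := fun i t => (ψ i ᵥ* G) ⬝ᵥ v t
  have hf : ∀ i, Differentiable ℝ (f i) := fun i t =>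
    ((hv t).hasDerivAt.const_dotProduct _).differentiableAt
  have hmode : ∀ i t, 0 < t → ![0, μ⁻¹, -μ⁻¹] i * deriv (f i) t = f i t := fun i t ht =>
    mul_deriv_vecMul_dotProduct (hv t) (hode t ht) (hψ i)
  have hvanish : ∀ i ≠ 2, ∀ t, 0 < t → f i t = 0 := by
    intro i hi t ht
    refine eq_zero_of_mul_deriv_eq_of_tendsto ?_ (hf i) (hmode i) ?_ ht
    · fin_cases i
      · simp
      · simpa using hμ.le
      · exact absurd rfl hi
    · exact ((continuous_const.dotProduct continuous_id).tendsto' 0 0 (dotProduct_zero _)).comp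
        hdecay
  have hdecaying : f 2 x = Complex.exp (-μ * x) * (Complex.exp μ * f 2 1) := by
    refine (eq_cexp_mul_of_deriv_eq_mul (hf 2) (fun t ht => ?_) hx).trans (by rw [neg_neg])
    rw [← hmode 2 t ht]
    simp [hμ0]
  refine eq_of_forall_dotProduct_eq hφ fun i => ?_
  rw [dotProduct_smul, dotProduct_smul, smul_eq_mul, smul_eq_mul]
  by_cases hi : i = 2
  · rw [hi]
    exact hdecaying
  · change f i x = Complex.exp (-μ * x) * (Complex.exp μ * f i 1)
    rw [hvanish i hi x hx, hvanish i hi 1 one_pos, mul_zero, mul_zero]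

theorem exists_eq_smul_of_mulVec_eq_zero (hμ : μ ≠ 0) {ψ : Fin 3 → Fin 3 → ℂ}
    (hψ : ∀ i, ψ i ᵥ* A = ![0, μ⁻¹, -μ⁻¹] i • ψ i ᵥ* G)
    (hφ : LinearIndependent ℂ fun i => ψ i ᵥ* G) {z₀ z : Fin 3 → ℂ} (hz₀ : z₀ ≠ 0)
    (h₀ : (G + μ • A) *ᵥ z₀ = 0) (h : (G + μ • A) *ᵥ z = 0) : ∃ c : ℂ, z = c • z₀ := by
  have horth : ∀ w, (G + μ • A) *ᵥ w = 0 → ∀ i ≠ 2, (ψ i ᵥ* G) ⬝ᵥ w = 0 := by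
    intro w hw i hi
    rw [← sub_neg_eq_add, ← neg_smul] at hw
    refine vecMul_dotProduct_eq_zero_of_mulVec_eq_zero hw (hψ i) ?_
    fin_cases i
    · simp
    · norm_num [hμ]
    · exact absurd rfl hi
  exact exists_eq_smul_of_forall_ne_dotProduct_eq_zero hφ 2 hz₀ (horth z₀ h₀) (horth z h)

end StableSubspace

/-- Stable subspace of the singular ODE system `A^d v' = G v` on the half-line:
if the generalized eigenvalues of the pencil are exactly `±μ` with `Re μ > 0`
(so exactly one of them, `-μ`, has negative real part), then the decaying
solutions are precisely those of the form `v(x) = e^{-μx} z` with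
`(G + μA^d)z = 0`, and this space of vectors `z` is one-dimensional. -/
theorem singular_ode_stable_subspace
    (A G : Matrix (Fin 3) (Fin 3) ℂ) (hA : A.det = 0)
    (μ : ℂ) (hμ : 0 < μ.re)
    (hdet : ∀ lam : ℂ, (G - lam • A).det = 0 ↔ lam = μ ∨ lam = -μ) :
    (∀ v : ℝ → Fin 3 → ℂ, Differentiable ℝ v →
      (((∀ x : ℝ, 0 < x → A.mulVec (deriv v x) = G.mulVec (v x)) ∧
          Tendsto v atTop (nhds 0)) ↔
        (∃ z : Fin 3 → ℂ, (G + μ • A).mulVec z = 0 ∧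
          ∀ x : ℝ, 0 < x → v x = Complex.exp (-μ * x) • z))) ∧
    (∃ z₀ : Fin 3 → ℂ, z₀ ≠ 0 ∧ (G + μ • A).mulVec z₀ = 0 ∧
      ∀ z : Fin 3 → ℂ, (G + μ • A).mulVec z = 0 → ∃ c : ℂ, z = c • z₀) := by
  have hμ0 : μ ≠ 0 := fun h => by simp [h] at hμ
  have hG : IsUnit G := by
    rw [isUnit_iff_isUnit_det, isUnit_iff_ne_zero]
    intro h
    simpa [eq_comm (a := (0 : ℂ)), hμ0] using (hdet 0).mp (by simpa using h)
  have hstable : G - (-μ) • A = G + μ • A := by rw [neg_smul, sub_neg_eq_add]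
  have hdet₂ : (G - (-μ) • A).det = 0 := (hdet (-μ)).mpr (.inr rfl)
  obtain ⟨ψ, hψ, hφ⟩ := exists_vecMul_eq_smul_vecMul_linearIndependent hA hG hμ0
    ((hdet μ).mpr (.inl rfl)) hdet₂
  refine ⟨fun v hv => ⟨fun ⟨hode, hdecay⟩ => ?_, fun ⟨z, hz, hvz⟩ => ?_⟩, ?_⟩
  · have hvz := eq_cexp_smul_of_tendsto_zero hμ hψ hφ hv hode hdecay
    refine ⟨_, ?_, hvz⟩
    rwa [← hstable, ← forall_mulVec_deriv_eq_iff_of_eq_cexp_smul hvz]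
  · rw [← hstable, ← forall_mulVec_deriv_eq_iff_of_eq_cexp_smul hvz] at hz
    refine ⟨hz, Tendsto.congr' ((eventually_gt_atTop 0).mono fun x hx => (hvz x hx).symm) ?_⟩
    simpa using (tendsto_cexp_mul_atTop_zero (by simpa using hμ : (-μ).re < 0)).smul_const z
  · obtain ⟨z₀, hz₀, h₀⟩ := exists_mulVec_eq_zero_iff.mpr (hstable ▸ hdet₂)
    exact ⟨z₀, hz₀, h₀, fun z h => exists_eq_smul_of_mulVec_eq_zero hμ0 hψ hφ hz₀ h₀ h⟩
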